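/- Main theorem: let (G, δ) be a displacement graph in dimension d and suppose G is strongly connected. Then the set of all velocities of trajectories of (G, δ), i.e. {u ∈ ℝ^d : there is a trajectory f with (1/n)·∑_{k=1}^n δ(f(k)) → u}, equals the convex hull in ℝ^d of the set of basic velocities of (G, δ). -/

import Mathlib

/-!
The first `n` steps of a trajectory, closed up by a return path of bounded length, form a closed
walk. Up to a permutation of its edges, a closed walk is a union of cycles, so its mean velocity is
a convex combination of basic velocities; letting `n → ∞` puts every velocity in the (closed)
convex hull.

Conversely, write `u = ∑ wᵢ vᵢ` with `vᵢ` the basic velocity of a cycle `cᵢ`. In round `N`, walk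
from a base vertex to each `cᵢ`, go around it about `N wᵢ / |cᵢ|` times, and come back. A round
has length about `N` and displacement `N u + O(1)`, so after `n ≈ R² / 2` steps the displacement
is `n u + O(R) = n u + O(√n)`.
-/

/-- A path in a directed multigraph with source map `s` and target map `t`:
a nonempty list of edges `e₁ … e_n` with `t eᵢ = s eᵢ₊₁`. -/
def IsPathList {V E : Type*} (s t : E → V) (p : List E) : Prop :=
  p ≠ [] ∧ p.Chain' (fun e f => t e = s f)

/-- A cycle: a path `e₁ … e_n` with `s e₁ = t e_n` whose vertices
`s e₁, …, s e_n` are pairwise distinct. -/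
def IsCycleList {V E : Type*} (s t : E → V) (p : List E) : Prop :=
  ∃ h : p ≠ [], p.Chain' (fun e f => t e = s f) ∧
    s (p.head h) = t (p.getLast h) ∧ (p.map s).Nodup

/-- Regard a vector of `ℤ^d` as a point of Euclidean space `ℝ^d`. -/
def toR {d : ℕ} (x : Fin d → ℤ) : EuclideanSpace ℝ (Fin d) := WithLp.toLp 2 (fun i => (x i : ℝ))

/-- A trajectory: a sequence of edges with `s (f (n+1)) = t (f n)`. -/
def IsTrajectory {V E : Type*} (s t : E → V) (f : ℕ → E) : Prop :=
  ∀ n : ℕ, s (f (n + 1)) = t (f n)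

/-- `u` is the velocity of the trajectory `f`:
`(1/n) · ∑_{k=1}^n δ(f k) → u` as `n → ∞`. -/
def HasVelocity {d : ℕ} {E : Type*} (δ : E → Fin d → ℤ) (f : ℕ → E)
    (u : EuclideanSpace ℝ (Fin d)) : Prop :=
  Filter.Tendsto (fun n : ℕ => (n : ℝ)⁻¹ • ∑ k ∈ Finset.Icc 1 n, toR (δ (f k)))
    Filter.atTop (nhds u)

/-- The set of basic velocities `δ(c)/|c|` of cycles `c`. -/
def basicVelocities {d : ℕ} {V E : Type*} (s t : E → V) (δ : E → Fin d → ℤ) :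
    Set (EuclideanSpace ℝ (Fin d)) :=
  {u | ∃ c : List E, IsCycleList s t c ∧ u = (c.length : ℝ)⁻¹ • toR (c.map δ).sum}

/-- The set of all velocities of trajectories. -/
def velocitySet {d : ℕ} {V E : Type*} (s t : E → V) (δ : E → Fin d → ℤ) :
    Set (EuclideanSpace ℝ (Fin d)) :=
  {u | ∃ f : ℕ → E, IsTrajectory s t f ∧ HasVelocity δ f u}

/-- `p` is a path from vertex `a` to vertex `b`. -/
def PathFrom {V E : Type*} (s t : E → V) (a b : V) (p : List E) : Prop :=
  ∃ h : p ≠ [], p.Chain' (fun e f => t e = s f) ∧ s (p.head h) = a ∧ t (p.getLast h) = b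

/-- Strong connectivity: any vertex can be reached from any vertex by a path. -/
def StronglyConnected {V E : Type*} (s t : E → V) : Prop :=
  ∀ v w : V, ∃ p : List E, PathFrom s t v w p

open Filter Topology

section Walk

variable {V E : Type*} {s t : E → V}

variable (s t) in
/-- Unlike `PathFrom`, this allows the empty walk from a vertex to itself. -/
def IsWalk : V → V → List E → Prop
  | a, b, [] => a = b
  | a, b, e :: p => s e = a ∧ IsWalk (t e) b p

@[simp] theorem isWalk_nil {a b : V} : IsWalk s t a b [] ↔ a = b := Iff.rfl

@[simp] theorem isWalk_cons {a b : V} {e : E} {p : List E} :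
    IsWalk s t a b (e :: p) ↔ s e = a ∧ IsWalk s t (t e) b p := Iff.rfl

theorem isWalk_append {a c : V} {p q : List E} :
    IsWalk s t a c (p ++ q) ↔ ∃ b, IsWalk s t a b p ∧ IsWalk s t b c q := by
  induction p generalizing a with
  | nil => simp
  | cons e p ih => simp [ih, and_assoc]

theorem IsWalk.append {a b c : V} {p q : List E} (hp : IsWalk s t a b p)
    (hq : IsWalk s t b c q) : IsWalk s t a c (p ++ q) :=
  isWalk_append.2 ⟨b, hp, hq⟩

theorem IsWalk.of_prefix {a b : V} {p q : List E} (hp : IsWalk s t a b p) (hqp : q <+: p) :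
    ∃ c, IsWalk s t a c q := by
  obtain ⟨r, rfl⟩ := hqp
  obtain ⟨c, hq, -⟩ := isWalk_append.1 hp
  exact ⟨c, hq⟩

theorem isWalk_flatten {a : V} {ps : List (List E)} (h : ∀ p ∈ ps, IsWalk s t a a p) :
    IsWalk s t a a ps.flatten := by
  induction ps with
  | nil => simp
  | cons p ps ih =>
    exact (h p List.mem_cons_self).append (ih fun q hq => h q (List.mem_cons_of_mem p hq))

theorem isWalk_iff_isChain {a b : V} {p : List E} (hp : p ≠ []) :
    IsWalk s t a b p ↔
      p.IsChain (fun e f => t e = s f) ∧ s (p.head hp) = a ∧ t (p.getLast hp) = b := by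
  induction p generalizing a with
  | nil => contradiction
  | cons e p ih =>
    rcases eq_or_ne p [] with rfl | hp'
    · simp
    · obtain ⟨f, p, rfl⟩ := List.exists_cons_of_ne_nil hp'
      rw [isWalk_cons, ih hp']
      simp only [List.isChain_cons_cons, List.head_cons, List.getLast_cons_cons]
      tauto

theorem PathFrom.isWalk {a b : V} {p : List E} (h : PathFrom s t a b p) : IsWalk s t a b p :=
  let ⟨hp, hchain, ha, hb⟩ := h
  (isWalk_iff_isChain hp).2 ⟨hchain, ha, hb⟩

theorem IsCycleList.exists_isWalk {c : List E} (h : IsCycleList s t c) :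
    ∃ a, IsWalk s t a a c :=
  let ⟨hc, hchain, hclosed, _⟩ := h
  ⟨_, (isWalk_iff_isChain hc).2 ⟨hchain, rfl, hclosed.symm⟩⟩

theorem IsWalk.isCycleList {a : V} {c : List E} (h : IsWalk s t a a c) (hc : c ≠ [])
    (hnd : (c.map s).Nodup) : IsCycleList s t c :=
  let ⟨hchain, ha, hb⟩ := (isWalk_iff_isChain hc).1 h
  ⟨hc, hchain, ha.trans hb.symm, hnd⟩

theorem IsTrajectory.isWalk_map_range {f : ℕ → E} (hf : IsTrajectory s t f) (n : ℕ) :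
    IsWalk s t (s (f 0)) (s (f n)) ((List.range n).map f) := by
  induction n with
  | zero => simp
  | succ n ih =>
    rw [List.range_succ, List.map_append]
    exact ih.append (by simp [hf n])

theorem isTrajectory_of_forall_isWalk {a : V} {f : ℕ → E}
    (h : ∀ n, ∃ b, IsWalk s t a b ((List.range n).map f)) : IsTrajectory s t f := by
  intro n
  obtain ⟨b, hb⟩ := h (n + 2)
  simp only [List.range_succ, List.map_append, isWalk_append, List.map_cons, List.map_nil,
    isWalk_cons, isWalk_nil] at hb
  obtain ⟨_, ⟨_, -, -, hn⟩, hn', -⟩ := hb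
  exact hn'.trans hn.symm

end Walk

theorem norm_sum_map_le {α F : Type*} [SeminormedAddCommGroup F] {φ : α → F} {C : ℝ}
    (hφ : ∀ a, ‖φ a‖ ≤ C) (l : List α) : ‖(l.map φ).sum‖ ≤ l.length * C := by
  induction l with
  | nil => simp
  | cons a l ih =>
    simp only [List.map_cons, List.sum_cons, List.length_cons, Nat.cast_succ]
    linarith [norm_add_le (φ a) (l.map φ).sum, hφ a]

section Displacement

variable {d : ℕ} {V E : Type*} {s t : E → V} (δ : E → Fin d → ℤ)

theorem toR_add (x y : Fin d → ℤ) : toR (x + y) = toR x + toR y := by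
  ext i
  simp [toR]

theorem toR_list_sum (l : List (Fin d → ℤ)) : toR l.sum = (l.map toR).sum := by
  induction l with
  | nil => ext i; simp [toR]
  | cons x l ih => simp [toR_add, ih]

def disp (p : List E) : EuclideanSpace ℝ (Fin d) := (p.map fun e => toR (δ e)).sum

noncomputable def meanVelocity (p : List E) : EuclideanSpace ℝ (Fin d) :=
  (p.length : ℝ)⁻¹ • disp δ p

variable {δ}

theorem mem_basicVelocities {u : EuclideanSpace ℝ (Fin d)} :
    u ∈ basicVelocities s t δ ↔ ∃ c, IsCycleList s t c ∧ u = meanVelocity δ c := by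
  simp [basicVelocities, meanVelocity, disp, toR_list_sum, Function.comp_def]

theorem disp_append (p q : List E) : disp δ (p ++ q) = disp δ p + disp δ q := by
  simp [disp]

theorem meanVelocity_eq_of_perm {p q : List E} (h : p.Perm q) :
    meanVelocity δ p = meanVelocity δ q := by
  rw [meanVelocity, meanVelocity, disp, disp, h.length_eq, (h.map _).sum_eq]

theorem meanVelocity_append {p q : List E} (hp : p ≠ []) (hq : q ≠ []) :
    meanVelocity δ (p ++ q) =
      (p.length / (p.length + q.length) : ℝ) • meanVelocity δ p +
        (q.length / (p.length + q.length) : ℝ) • meanVelocity δ q := by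
  have hp : (p.length : ℝ) ≠ 0 := by simpa using hp
  have hq : (q.length : ℝ) ≠ 0 := by simpa using hq
  simp only [meanVelocity, disp_append, List.length_append, Nat.cast_add, smul_smul, smul_add]
  congr 2 <;> field_simp

theorem Convex.meanVelocity_append_mem {K : Set (EuclideanSpace ℝ (Fin d))} (hK : Convex ℝ K)
    {p q : List E} (hp : p ≠ [] → meanVelocity δ p ∈ K) (hq : q ≠ [] → meanVelocity δ q ∈ K)
    (hpq : p ++ q ≠ []) : meanVelocity δ (p ++ q) ∈ K := by
  rcases eq_or_ne p [] with rfl | hp0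
  · simpa using hq (by simpa using hpq)
  rcases eq_or_ne q [] with rfl | hq0
  · simpa using hp hp0
  rw [meanVelocity_append hp0 hq0]
  apply hK (hp hp0) (hq hq0) (by positivity) (by positivity)
  have : (0 : ℝ) < p.length := by simpa [List.length_pos_iff] using hp0
  field_simp

theorem Convex.meanVelocity_flatten_mem {K : Set (EuclideanSpace ℝ (Fin d))} (hK : Convex ℝ K)
    {cs : List (List E)} (h : ∀ c ∈ cs, c ≠ [] → meanVelocity δ c ∈ K) :
    cs.flatten ≠ [] → meanVelocity δ cs.flatten ∈ K := by
  induction cs with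
  | nil => simp
  | cons c cs ih =>
    exact hK.meanVelocity_append_mem (h c List.mem_cons_self)
      (ih fun c' hc' => h c' (List.mem_cons_of_mem c hc'))

theorem norm_meanVelocity_le {C : ℝ} (hC : ∀ e, ‖toR (δ e)‖ ≤ C) {p : List E} (hp : p ≠ []) :
    ‖meanVelocity δ p‖ ≤ C := by
  have hlen : (0 : ℝ) < p.length := by simpa [List.length_pos_iff] using hp
  rw [meanVelocity, norm_smul, norm_inv, Real.norm_natCast, inv_mul_le_iff₀ hlen]
  exact norm_sum_map_le hC p

theorem norm_meanVelocity_sub_meanVelocity_append_le {C : ℝ} (hC : ∀ e, ‖toR (δ e)‖ ≤ C)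
    {p : List E} (hp : p ≠ []) (q : List E) :
    ‖meanVelocity δ p - meanVelocity δ (p ++ q)‖ ≤ 2 * C * q.length / p.length := by
  rcases eq_or_ne q [] with rfl | hq
  · simp
  have hP : (0 : ℝ) < p.length := by simpa [List.length_pos_iff] using hp
  have hQ : (0 : ℝ) < q.length := by simpa [List.length_pos_iff] using hq
  have key : meanVelocity δ p - meanVelocity δ (p ++ q) =
      (q.length / (p.length + q.length) : ℝ) • (meanVelocity δ p - meanVelocity δ q) := by
    rw [meanVelocity_append hp hq, smul_sub]
    have : (p.length / (p.length + q.length) : ℝ) = 1 - q.length / (p.length + q.length) := by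
      field_simp; ring
    rw [this, sub_smul, one_smul]
    abel
  rw [key, norm_smul, Real.norm_of_nonneg (by positivity)]
  calc (q.length / (p.length + q.length) : ℝ) * ‖meanVelocity δ p - meanVelocity δ q‖
      ≤ (q.length / p.length : ℝ) * (2 * C) := by
        gcongr
        · linarith
        · linarith [norm_sub_le (meanVelocity δ p) (meanVelocity δ q),
            norm_meanVelocity_le hC hp, norm_meanVelocity_le hC hq]
    _ = 2 * C * q.length / p.length := by ring

theorem meanVelocity_sub {p : List E} (hp : p ≠ []) (u : EuclideanSpace ℝ (Fin d)) :
    meanVelocity δ p - u = (p.length : ℝ)⁻¹ • (p.map fun e => toR (δ e) - u).sum := by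
  have hsum (l : List E) :
      (l.map fun e => toR (δ e) - u).sum = disp δ l - (l.length : ℝ) • u := by
    induction l with
    | nil => simp [disp]
    | cons e l ih =>
      simp only [List.map_cons, List.sum_cons, ih, disp, List.length_cons, Nat.cast_succ]
      module
  have hlen : (p.length : ℝ) ≠ 0 := by simpa using hp
  rw [hsum, smul_sub, smul_smul, inv_mul_cancel₀ hlen, one_smul, meanVelocity]

end Displacement

section CycleDecomposition

variable {d : ℕ} {V E : Type*} {s t : E → V}

theorem IsWalk.exists_perm_append_flatten {a b : V} {p : List E} (h : IsWalk s t a b p) :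
    ∃ (r : List E) (cs : List (List E)), IsWalk s t a b r ∧ (r.map s).Nodup ∧
      (∀ c ∈ cs, IsCycleList s t c) ∧ p.Perm (r ++ cs.flatten) := by
  induction p generalizing a with
  | nil => exact ⟨[], [], h, by simp, by simp, by simp⟩
  | cons e p ih =>
    obtain ⟨rfl, hp⟩ := isWalk_cons.1 h
    obtain ⟨r, cs, hr, hnd, hcs, hperm⟩ := ih hp
    by_cases hmem : s e ∈ r.map s
    · -- `e` closes a cycle with the part of `r` before the vertex `s e`
      obtain ⟨x, hx, hxe⟩ := List.mem_map.1 hmem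
      obtain ⟨r₁, r₂, rfl⟩ := List.append_of_mem hx
      obtain ⟨m, hr₁, hr₂⟩ := isWalk_append.1 hr
      obtain ⟨rfl, -⟩ := isWalk_cons.1 hr₂
      rw [List.map_append, List.nodup_append] at hnd
      refine ⟨x :: r₂, (e :: r₁) :: cs, hxe ▸ hr₂, hnd.2.1, ?_, ?_⟩
      · intro c hc
        rcases List.mem_cons.1 hc with rfl | hc
        · refine IsWalk.isCycleList (a := s e) ⟨rfl, hxe ▸ hr₁⟩ (List.cons_ne_nil _ _) ?_
          refine List.nodup_cons.2 ⟨fun he => ?_, hnd.1⟩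
          exact hnd.2.2 _ he _ (List.mem_map_of_mem List.mem_cons_self) hxe.symm
        · exact hcs c hc
      · refine (hperm.cons e).trans ?_
        simpa using (List.perm_append_comm (l₁ := e :: r₁) (l₂ := x :: r₂)).append_right _
    · refine ⟨e :: r, cs, ⟨rfl, hr⟩, List.nodup_cons.2 ⟨hmem, hnd⟩, hcs, hperm.cons e⟩

theorem IsWalk.meanVelocity_mem_convexHull (δ : E → Fin d → ℤ) {a : V} {p : List E}
    (h : IsWalk s t a a p) (hp : p ≠ []) :
    meanVelocity δ p ∈ convexHull ℝ (basicVelocities s t δ) := by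
  obtain ⟨r, cs, hr, hnd, hcs, hperm⟩ := h.exists_perm_append_flatten
  have hbasic : ∀ c, IsCycleList s t c → meanVelocity δ c ∈ convexHull ℝ (basicVelocities s t δ) :=
    fun c hc => subset_convexHull ℝ _ (mem_basicVelocities.2 ⟨c, hc, rfl⟩)
  rw [meanVelocity_eq_of_perm hperm]
  exact (convex_convexHull ℝ _).meanVelocity_append_mem
    (fun hr0 => hbasic r (hr.isCycleList hr0 hnd))
    ((convex_convexHull ℝ _).meanVelocity_flatten_mem fun c hc _ => hbasic c (hcs c hc))
    fun h0 => hp (h0 ▸ hperm).eq_nil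

end CycleDecomposition

section VelocitiesInHull

variable {d : ℕ} {V E : Type*} {s t : E → V} {δ : E → Fin d → ℤ}

theorem hasVelocity_iff_tendsto_meanVelocity {f : ℕ → E} {u : EuclideanSpace ℝ (Fin d)} :
    HasVelocity δ f u ↔
      Tendsto (fun n => meanVelocity δ ((List.range n).map fun k => f (k + 1))) atTop (𝓝 u) := by
  have hsum (n : ℕ) :
      ∑ k ∈ Finset.Icc 1 n, toR (δ (f k)) = disp δ ((List.range n).map fun k => f (k + 1)) := by
    induction n with
    | zero => simp [disp]
    | succ n ih =>
      rw [Finset.sum_Icc_succ_top (by omega), ih, List.range_succ, List.map_append, disp_append]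
      simp [disp]
  simp [HasVelocity, meanVelocity, hsum]

theorem finite_basicVelocities [Fintype E] (δ : E → Fin d → ℤ) :
    (basicVelocities s t δ).Finite := by
  refine ((List.finite_length_le E (Fintype.card E)).image (meanVelocity δ)).subset ?_
  intro u hu
  obtain ⟨c, ⟨-, -, -, hnd⟩, rfl⟩ := mem_basicVelocities.1 hu
  exact ⟨c, (hnd.of_map s).length_le_card, rfl⟩

theorem velocitySet_subset_convexHull [Fintype E] (δ : E → Fin d → ℤ)
    (hconn : StronglyConnected s t) :
    velocitySet s t δ ⊆ convexHull ℝ (basicVelocities s t δ) := by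
  rintro u ⟨f, hf, hu⟩
  rw [hasVelocity_iff_tendsto_meanVelocity] at hu
  set g : ℕ → E := fun k => f (k + 1)
  have hg : IsTrajectory s t g := fun n => hf (n + 1)
  -- close the first `n` steps into a closed walk by a return path of bounded length
  choose Q hQ using fun e : E => hconn (s e) (s (g 0))
  obtain ⟨C, hC⟩ := Finite.bddAbove_range fun e => ‖toR (δ e)‖
  obtain ⟨M, hM⟩ := Finite.bddAbove_range fun e => ((Q e).length : ℝ)
  have hC0 : 0 ≤ C := (norm_nonneg _).trans (hC ⟨g 0, rfl⟩)
  have hclosed (n : ℕ) : meanVelocity δ ((List.range n).map g ++ Q (g n)) ∈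
      convexHull ℝ (basicVelocities s t δ) :=
    ((hg.isWalk_map_range n).append (hQ _).isWalk).meanVelocity_mem_convexHull δ
      (by simp [(hQ _).1])
  have hclose : Tendsto (fun n => meanVelocity δ ((List.range n).map g) -
      meanVelocity δ ((List.range n).map g ++ Q (g n))) atTop (𝓝 0) := by
    refine squeeze_zero_norm' ?_ (tendsto_const_div_atTop_nhds_zero_nat (2 * C * M))
    filter_upwards [eventually_ge_atTop 1] with n hn
    have hne : (List.range n).map g ≠ [] := by simp; omega
    calc _ ≤ 2 * C * (Q (g n)).length / ((List.range n).map g).length :=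
          norm_meanVelocity_sub_meanVelocity_append_le (fun e => hC ⟨e, rfl⟩) hne _
      _ ≤ 2 * C * M / n := by
          rw [List.length_map, List.length_range]
          gcongr
          exact hM ⟨_, rfl⟩
  exact ((finite_basicVelocities δ).isClosed_convexHull ℝ).mem_of_tendsto
    (by simpa using hu.sub hclose) (Eventually.of_forall hclosed)

end VelocitiesInHull

section SeqFlatten

variable {α : Type*} {B : ℕ → List α}

/-- The sequence `B 0 ++ B 1 ++ ⋯`. The default `x` is never read when every `B k` is nonempty. -/
def seqFlatten (B : ℕ → List α) (x : α) (n : ℕ) : α :=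
  ((List.range (n + 1)).flatMap B).getD n x

theorem flatMap_range_prefix {K K' : ℕ} (h : K ≤ K') :
    (List.range K).flatMap B <+: (List.range K').flatMap B := by
  obtain ⟨m, rfl⟩ := Nat.exists_eq_add_of_le h
  rw [List.range_add, List.flatMap_append]
  exact List.prefix_append _ _

theorem flatMap_range_succ (K : ℕ) :
    (List.range (K + 1)).flatMap B = (List.range K).flatMap B ++ B K := by
  simp [List.range_succ]

theorem le_length_flatMap_range (hB : ∀ k, B k ≠ []) (K : ℕ) :
    K ≤ ((List.range K).flatMap B).length := by
  induction K with
  | zero => simp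
  | succ K ih =>
    have := List.length_pos_iff.2 (hB K)
    rw [flatMap_range_succ, List.length_append]
    omega

theorem map_range_seqFlatten (hB : ∀ k, B k ≠ []) (x : α) {n K : ℕ}
    (h : n ≤ ((List.range K).flatMap B).length) :
    (List.range n).map (seqFlatten B x) = ((List.range K).flatMap B).take n := by
  refine List.ext_getElem (by simpa using h) fun j hj _ => ?_
  have hj' : j < ((List.range (j + 1)).flatMap B).length := le_length_flatMap_range hB _
  simp only [List.getElem_map, List.getElem_range, List.getElem_take, seqFlatten,
    List.getD_eq_getElem _ _ hj']
  rcases le_total (j + 1) K with hK | hK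
  · exact (flatMap_range_prefix hK).getElem hj'
  · exact ((flatMap_range_prefix hK).getElem _).symm

theorem exists_length_flatMap_range_le_le (hB : ∀ k, B k ≠ []) (n : ℕ) :
    ∃ R, ((List.range R).flatMap B).length ≤ n ∧ n ≤ ((List.range (R + 1)).flatMap B).length := by
  classical
  have hex : ∃ R, n ≤ ((List.range (R + 1)).flatMap B).length :=
    ⟨n, (Nat.le_succ n).trans (le_length_flatMap_range hB _)⟩
  refine ⟨Nat.find hex, ?_, Nat.find_spec hex⟩
  rcases h : Nat.find hex with _ | R
  · simp
  · have := Nat.find_min hex (m := R) (by omega)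
    omega

end SeqFlatten

section BlockAverages

variable {α F : Type*} [SeminormedAddCommGroup F] {φ : α → F} {B : ℕ → List α}

theorem mul_succ_le_two_mul_length_flatMap_range (hlen : ∀ N, N + 1 ≤ (B N).length) (R : ℕ) :
    R * (R + 1) ≤ 2 * ((List.range R).flatMap B).length := by
  induction R with
  | zero => simp
  | succ R ih =>
    rw [flatMap_range_succ, List.length_append]
    nlinarith [hlen R]

/-- The first `n` terms consist of `R ≤ 2√n` complete blocks (the `N`-th block has length at
least `N + 1`) and part of one more. -/
theorem norm_sum_map_seqFlatten_le {C K : ℝ} {L : ℕ} (hφ : ∀ a, ‖φ a‖ ≤ C)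
    (hlen : ∀ N, N + 1 ≤ (B N).length ∧ (B N).length ≤ N + 1 + L)
    (hK : ∀ N, ‖((B N).map φ).sum‖ ≤ K) (x : α) (n : ℕ) :
    ‖(((List.range n).map (seqFlatten B x)).map φ).sum‖ ≤ 2 * (K + C) * √n + C * (L + 1) := by
  have hB (N : ℕ) : B N ≠ [] := List.ne_nil_of_length_pos (by linarith [(hlen N).1])
  have hC : 0 ≤ C := (norm_nonneg _).trans (hφ ((B 0).head (hB 0)))
  have hK0 : 0 ≤ K := (norm_nonneg _).trans (hK 0)
  obtain ⟨R, hR, hR'⟩ := exists_length_flatMap_range_le_le hB n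
  have hRn : (R : ℝ) ≤ 2 * √n := by
    have h := (mul_succ_le_two_mul_length_flatMap_range (fun N => (hlen N).1) R).trans
      (Nat.mul_le_mul_left 2 hR)
    have h' : (R : ℝ) ^ 2 ≤ 4 * n := by
      have : ((R * (R + 1) : ℕ) : ℝ) ≤ ((2 * n : ℕ) : ℝ) := by exact_mod_cast h
      push_cast at this
      nlinarith
    nlinarith [Real.sq_sqrt (Nat.cast_nonneg (α := ℝ) n), Real.sqrt_nonneg n]
  have hfull : ‖(((List.range R).flatMap B).map φ).sum‖ ≤ R * K := by
    simpa [List.flatMap, List.map_flatten, List.sum_flatten, Function.comp_def] using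
      norm_sum_map_le hK (List.range R)
  have hpart : ‖(((B R).take (n - ((List.range R).flatMap B).length)).map φ).sum‖ ≤
      (R + 1 + L) * C := by
    refine (norm_sum_map_le hφ _).trans (mul_le_mul_of_nonneg_right ?_ hC)
    exact_mod_cast (List.length_take_le' _ _).trans (hlen R).2
  rw [map_range_seqFlatten hB x hR', flatMap_range_succ, List.take_append,
    List.take_of_length_le hR, List.map_append, List.sum_append]
  calc _ ≤ R * K + (R + 1 + L) * C := (norm_add_le _ _).trans (add_le_add hfull hpart)
    _ = (K + C) * R + C * (L + 1) := by ring
    _ ≤ 2 * (K + C) * √n + C * (L + 1) := by nlinarith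

theorem tendsto_inv_smul_of_norm_le_sqrt [NormedSpace ℝ F] {S : ℕ → F} {A A' : ℝ}
    (h : ∀ n, ‖S n‖ ≤ A * √n + A') : Tendsto (fun n : ℕ => (n : ℝ)⁻¹ • S n) atTop (𝓝 0) := by
  have hsqrt : Tendsto (fun n : ℕ => (√n)⁻¹) atTop (𝓝 0) :=
    tendsto_inv_atTop_zero.comp (Real.tendsto_sqrt_atTop.comp tendsto_natCast_atTop_atTop)
  have hinv : Tendsto (fun n : ℕ => (n : ℝ)⁻¹) atTop (𝓝 0) := tendsto_inv_atTop_nhds_zero_nat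
  refine squeeze_zero_norm (fun n => ?_)
    (by simpa using (hsqrt.const_mul A).add (hinv.const_mul A'))
  rw [norm_smul, norm_inv, Real.norm_natCast]
  calc (n : ℝ)⁻¹ * ‖S n‖ ≤ (n : ℝ)⁻¹ * (A * √n + A') := by gcongr; exact h n
    _ = A * (√n / n) + A' * (n : ℝ)⁻¹ := by ring
    _ = A * (√n)⁻¹ + A' * (n : ℝ)⁻¹ := by rw [Real.sqrt_div_self]

end BlockAverages

section Rounds

variable {α ι : Type*} [Fintype ι]

noncomputable def roundList (P c Q : ι → List α) (μ : ι → ℝ) (N : ℕ) : List α :=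
  Finset.univ.toList.flatMap fun i => P i ++ (List.replicate ⌈N * μ i⌉₊ (c i)).flatten ++ Q i

variable {P c Q : ι → List α} {μ : ι → ℝ}

theorem length_roundList (N : ℕ) : ((roundList P c Q μ N).length : ℝ) =
    ∑ i, ((P i).length + ⌈N * μ i⌉₊ * (c i).length + (Q i).length : ℝ) := by
  simp [roundList, List.length_flatMap, Finset.sum_map_toList, List.length_flatten, add_assoc]

theorem le_length_roundList (hμ1 : ∑ i, μ i * (c i).length = 1) (N : ℕ) :
    (N : ℝ) ≤ (roundList P c Q μ N).length := by
  rw [length_roundList]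
  calc (N : ℝ) = ∑ i, N * μ i * (c i).length := by simp [mul_assoc, ← Finset.mul_sum, hμ1]
    _ ≤ _ := Finset.sum_le_sum fun i _ => by
      have := Nat.le_ceil (N * μ i)
      nlinarith [Nat.cast_nonneg (α := ℝ) (c i).length, Nat.cast_nonneg (α := ℝ) (P i).length,
        Nat.cast_nonneg (α := ℝ) (Q i).length]

theorem length_roundList_le (hμ : ∀ i, 0 ≤ μ i) (hμ1 : ∑ i, μ i * (c i).length = 1) (N : ℕ) :
    ((roundList P c Q μ N).length : ℝ) ≤ N + ∑ i, ((P i).length + (c i).length + (Q i).length) := by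
  rw [length_roundList]
  calc _ ≤ ∑ i, (N * μ i * (c i).length + ((P i).length + (c i).length + (Q i).length) : ℝ) :=
        Finset.sum_le_sum fun i _ => by
          have := Nat.ceil_lt_add_one (mul_nonneg (Nat.cast_nonneg N) (hμ i))
          nlinarith [Nat.cast_nonneg (α := ℝ) (c i).length]
    _ = _ := by simp [Finset.sum_add_distrib, mul_assoc, ← Finset.mul_sum, hμ1]

theorem sum_map_roundList {F : Type*} [AddCommMonoid F] (φ : α → F) (N : ℕ) :
    ((roundList P c Q μ N).map φ).sum =
    ∑ i, (((P i).map φ).sum + ⌈N * μ i⌉₊ • ((c i).map φ).sum + ((Q i).map φ).sum) := by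
  simp [roundList, List.flatMap, List.map_flatten, List.sum_flatten, Finset.sum_map_toList,
    Function.comp_def, add_assoc]

/-- Once the weights `μ` balance the cycle sums, only the connecting paths and the rounding of
`N μᵢ` contribute, which is independent of `N`. -/
theorem norm_sum_map_roundList_le {F : Type*} [SeminormedAddCommGroup F] [NormedSpace ℝ F]
    {φ : α → F} {C : ℝ} (hφ : ∀ a, ‖φ a‖ ≤ C)
    (hμ : ∀ i, 0 ≤ μ i) (hbal : ∑ i, μ i • ((c i).map φ).sum = 0) (N : ℕ) :
    ‖((roundList P c Q μ N).map φ).sum‖ ≤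
      C * ∑ i, ((P i).length + (c i).length + (Q i).length : ℝ) := by
  rw [sum_map_roundList, ← sub_zero (∑ i, _), ← smul_zero (N : ℝ), ← hbal, Finset.smul_sum,
    ← Finset.sum_sub_distrib, Finset.mul_sum]
  refine (norm_sum_le _ _).trans (Finset.sum_le_sum fun i _ => ?_)
  have hround : ‖(⌈N * μ i⌉₊ - N * μ i : ℝ) • ((c i).map φ).sum‖ ≤ (c i).length * C := by
    have h0 := Nat.le_ceil (N * μ i)
    have h1 := Nat.ceil_lt_add_one (mul_nonneg (Nat.cast_nonneg N) (hμ i))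
    rw [norm_smul, Real.norm_of_nonneg (by linarith)]
    nlinarith [norm_sum_map_le hφ (c i), norm_nonneg ((c i).map φ).sum]
  calc _ = ‖((P i).map φ).sum + (⌈N * μ i⌉₊ - N * μ i : ℝ) • ((c i).map φ).sum +
        ((Q i).map φ).sum‖ := by
        congr 1
        rw [sub_smul, ← Nat.cast_smul_eq_nsmul ℝ, smul_smul]
        abel
    _ ≤ (P i).length * C + (c i).length * C + (Q i).length * C := by
        exact norm_add₃_le.trans (add_le_add_three (norm_sum_map_le hφ _) hround
          (norm_sum_map_le hφ _))
    _ = _ := by ring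

theorem IsWalk.roundList {V : Type*} {s t : α → V} {v : V} {a : ι → V}
    (hP : ∀ i, IsWalk s t v (a i) (P i)) (hc : ∀ i, IsWalk s t (a i) (a i) (c i))
    (hQ : ∀ i, IsWalk s t (a i) v (Q i)) (μ : ι → ℝ) (N : ℕ) :
    IsWalk s t v v (roundList P c Q μ N) := by
  refine isWalk_flatten ?_
  simp only [List.mem_map]
  rintro _ ⟨i, -, rfl⟩
  refine ((hP i).append (isWalk_flatten fun p hp => ?_)).append (hQ i)
  rw [List.eq_of_mem_replicate hp]
  exact hc i

end Rounds

section HullInVelocities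

variable {d : ℕ} {V E : Type*} {s t : E → V} {δ : E → Fin d → ℤ}

theorem mem_velocitySet_of_closedWalks [Finite E] {u : EuclideanSpace ℝ (Fin d)} {v : V}
    {B : ℕ → List E} {L : ℕ} {K : ℝ} (hB : ∀ N, IsWalk s t v v (B N))
    (hlen : ∀ N, N + 1 ≤ (B N).length ∧ (B N).length ≤ N + 1 + L)
    (hK : ∀ N, ‖((B N).map fun e => toR (δ e) - u).sum‖ ≤ K) : u ∈ velocitySet s t δ := by
  have hne (N : ℕ) : B N ≠ [] := List.ne_nil_of_length_pos (by linarith [(hlen N).1])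
  set e₀ := (B 0).getLast (hne 0)
  have he₀ : t e₀ = v := ((isWalk_iff_isChain (hne 0)).1 (hB 0)).2.2
  set g := seqFlatten B e₀
  have hprefix (n : ℕ) : ∃ b, IsWalk s t v b ((List.range n).map g) := by
    rw [map_range_seqFlatten hne e₀ (le_length_flatMap_range hne n)]
    refine IsWalk.of_prefix (isWalk_flatten ?_) (List.take_prefix _ _)
    simpa using fun N _ => hB N
  have hg0 : s (g 0) = v := by
    obtain ⟨b, hb⟩ := hprefix 1
    exact hb.1
  obtain ⟨C, hC⟩ := Finite.bddAbove_range fun e => ‖toR (δ e) - u‖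
  refine ⟨fun | 0 => e₀ | k + 1 => g k, ?_, ?_⟩
  · rintro (_ | n)
    exacts [hg0.trans he₀.symm, isTrajectory_of_forall_isWalk hprefix n]
  · rw [hasVelocity_iff_tendsto_meanVelocity, ← tendsto_sub_nhds_zero_iff]
    refine (tendsto_inv_smul_of_norm_le_sqrt
      (norm_sum_map_seqFlatten_le (fun e => hC ⟨e, rfl⟩) hlen hK e₀)).congr' ?_
    filter_upwards [eventually_gt_atTop 0] with n hn
    rw [meanVelocity_sub (by simpa using hn.ne'), List.length_map, List.length_range,
      List.map_map]

theorem convexHull_subset_velocitySet [Fintype E] (δ : E → Fin d → ℤ)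
    (hconn : StronglyConnected s t) :
    convexHull ℝ (basicVelocities s t δ) ⊆ velocitySet s t δ := by
  intro u hu
  obtain ⟨ι, _, w, z, hw0, hw1, hz, rfl⟩ := mem_convexHull_iff_exists_fintype.1 hu
  choose c hc hcz using fun i => mem_basicVelocities.1 (hz i)
  choose a ha using fun i => (hc i).exists_isWalk
  obtain ⟨i₀⟩ : Nonempty ι := by
    by_contra h
    simp [not_nonempty_iff.1 h] at hw1
  choose P hP using fun i => hconn (a i₀) (a i)
  choose Q hQ using fun i => hconn (a i) (a i₀)
  set u := ∑ i, w i • z i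
  have hclen (i : ι) : (0 : ℝ) < (c i).length := by
    simpa [List.length_pos_iff] using (hc i).1
  -- going `N μᵢ` times around `c i` takes time `N wᵢ`
  set μ : ι → ℝ := fun i => w i / (c i).length
  have hμ (i : ι) : 0 ≤ μ i := div_nonneg (hw0 i) (hclen i).le
  have hμ1 : ∑ i, μ i * (c i).length = 1 := by
    rw [← hw1]
    exact Finset.sum_congr rfl fun i _ => div_mul_cancel₀ _ (hclen i).ne'
  have hbal : ∑ i, μ i • ((c i).map fun e => toR (δ e) - u).sum = 0 := by
    have hdrift (i : ι) : μ i • ((c i).map fun e => toR (δ e) - u).sum = w i • (z i - u) := by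
      rw [hcz i, meanVelocity_sub (hc i).1, smul_smul, ← div_eq_mul_inv]
    simp only [hdrift, smul_sub, Finset.sum_sub_distrib, ← Finset.sum_smul, hw1, one_smul, u,
      sub_self]
  obtain ⟨C, hC⟩ := Finite.bddAbove_range fun e => ‖toR (δ e) - u‖
  refine mem_velocitySet_of_closedWalks (B := fun N => roundList P c Q μ (N + 1))
    (L := ∑ i, ((P i).length + (c i).length + (Q i).length))
    (fun N => IsWalk.roundList (fun i => (hP i).isWalk) ha (fun i => (hQ i).isWalk) μ _)
    (fun N => ⟨?_, ?_⟩) (norm_sum_map_roundList_le (fun e => hC ⟨e, rfl⟩) hμ hbal <| · + 1)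
  · exact_mod_cast le_length_roundList hμ1 (N + 1)
  · exact_mod_cast length_roundList_le hμ hμ1 (N + 1)

end HullInVelocities

theorem stmt11_general {d : ℕ} {V E : Type*} [Fintype E]
    (s t : E → V) (δ : E → Fin d → ℤ) (hconn : StronglyConnected s t) :
    velocitySet s t δ = convexHull ℝ (basicVelocities s t δ) :=
  (velocitySet_subset_convexHull δ hconn).antisymm (convexHull_subset_velocitySet δ hconn)

/-- Main theorem: if `G` is strongly connected, then the set of all velocities
of trajectories equals the convex hull of the set of basic velocities. -/
theorem stmt11 {d : ℕ} (hd : 1 ≤ d) {V E : Type*} [Fintype V] [Nonempty V] [Fintype E]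
    (s t : E → V) (δ : E → Fin d → ℤ) (hconn : StronglyConnected s t) :
    velocitySet s t δ = convexHull ℝ (basicVelocities s t δ) :=
  stmt11_general s t δ hconn
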